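/- Let R = F₂[τ][u, v]/(u² + τv) and let L be the localization of R at the multiplicative set of powers of v. Then L is a free module over F₂[τ] with basis {v^j : j ∈ ℤ} ∪ {u·v^j : j ∈ ℤ} (images of v^j and uv^j, with v^{−1} the inverse of v). -/

import Mathlib

open MvPolynomial

set_option synthInstance.maxHeartbeats 2000000
set_option maxHeartbeats 2000000

/-- `F₂[τ, u, v]`, with `τ = X 0`, `u = X 1`, `v = X 2`. -/
abbrev Poly18 := MvPolynomial (Fin 3) (ZMod 2)

/-- The ideal `(u² + τ·v)`. -/
noncomputable def relIdeal18 : Ideal Poly18 := Ideal.span {X 1 ^ 2 + X 0 * X 2}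

/-- `R = F₂[τ][u, v]/(u² + τ·v)`. -/
abbrev Ring18 := Poly18 ⧸ relIdeal18

/-- The structure map `F₂[τ] → R`, `τ ↦ τ`. -/
noncomputable def structMap18 : Polynomial (ZMod 2) →+* Ring18 :=
  ((Ideal.Quotient.mkₐ (ZMod 2) relIdeal18).comp
    (Polynomial.aeval (X 0 : Poly18) :
      Polynomial (ZMod 2) →ₐ[ZMod 2] Poly18)).toRingHom

/-!
Once `v` is inverted, the relation `u² + τv = 0` (in characteristic two) expresses `τ` as `u²v⁻¹`,
so `L` is the Laurent ring `F₂[u, v, v⁻¹]`. There `τⁿ · uᵃvʲ = u^(a+2n) v^(j-n)`, hence every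
monomial is uniquely `τ^(a/2) · u^(a mod 2) v^(j + a/2)`, and the monomials `vʲ`, `uvʲ` form an
`F₂[τ]`-basis. To see that `F₂[u, v, v⁻¹]` is a localization of `R` at `v`, the only nonformal
condition (on the kernel) is pulled back from `Localization.Away v` along `uᵃvʲ ↦ uᵃvʲ`.
-/

open AddMonoidAlgebra

namespace UVLaurent

noncomputable section

section TauBasis

variable {k : Type*} [CommSemiring k]

/-- `k[ℕ × ℤ]` stands for `k[u, v, v⁻¹]`, with `single (a, j) 1 = uᵃvʲ`; `τ` acts as `u²v⁻¹`. -/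
scoped instance algebraPolynomial : Algebra (Polynomial k) k[ℕ × ℤ] :=
  (Polynomial.aeval (single ((2 : ℕ), (-1 : ℤ)) (1 : k))).toRingHom.toAlgebra

lemma monomial_smul_single (n : ℕ) (c : k) (a : ℕ) (j : ℤ) :
    Polynomial.monomial n c • single (a, j) (1 : k) = single (a + 2 * n, j - n) c := by
  change Polynomial.aeval _ _ * _ = _
  simp only [Polynomial.aeval_monomial, single_pow, one_pow, coe_algebraMap, Function.comp_apply,
    single_mul_single, mul_one]
  congr 1
  ext <;> simp <;> ring

def tauCoord : k[ℕ × ℤ] →+ (Bool × ℤ →₀ Polynomial k) :=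
  (Finsupp.liftAddHom fun y : ℕ × ℤ => (Finsupp.singleAddHom (y.1.bodd, y.2 + y.1.div2)).comp
    (Polynomial.monomial y.1.div2).toAddMonoidHom).comp coeffAddEquiv.toAddMonoidHom

lemma tauCoord_single (a : ℕ) (j : ℤ) (c : k) :
    tauCoord (single (a, j) c) = .single (a.bodd, j + a.div2) (Polynomial.monomial a.div2 c) := by
  simp [tauCoord]

lemma tauCoord_smul_single (p : Polynomial k) (ε : Bool) (j : ℤ) :
    tauCoord (p • single (ε.toNat, j) (1 : k)) = .single (ε, j) p := by
  induction p using Polynomial.induction_on' with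
  | add p q hp hq => rw [add_smul, map_add, hp, hq, Finsupp.single_add]
  | monomial n c =>
    have hdiv2 : (ε.toNat + 2 * n).div2 = n := by cases ε <;> simp [Nat.div2_val]; omega
    rw [monomial_smul_single, tauCoord_single, hdiv2]
    congr 2 <;> cases ε <;> simp [Nat.bodd_add, Nat.bodd_mul]

lemma single_eq_monomial_smul (a : ℕ) (j : ℤ) (c : k) :
    single (a, j) c = Polynomial.monomial a.div2 c • single (a.bodd.toNat, j + a.div2) (1 : k) := by
  rw [monomial_smul_single, Nat.bodd_add_div2, add_sub_cancel_right]

def tauBasis : Module.Basis (Bool × ℤ) (Polynomial k) k[ℕ × ℤ] :=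
  .ofRepr <| LinearEquiv.symm
    { Finsupp.linearCombination (Polynomial k) fun p : Bool × ℤ => single (p.1.toNat, p.2) (1 : k) with
      invFun := tauCoord
      left_inv := fun x => by
        induction x using Finsupp.induction_linear with
        | zero => simp
        | add f g hf hg => simp_all
        | single p c => simp [tauCoord_smul_single]
      right_inv := fun m => by
        induction m using AddMonoidAlgebra.induction_linear with
        | zero => simp
        | add f g hf hg => simp_all
        | single y c => rw [single_eq_monomial_smul, tauCoord_smul_single]; simp }

lemma tauBasis_apply (ε : Bool) (j : ℤ) : tauBasis (ε, j) = single (ε.toNat, j) (1 : k) := by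
  simp [tauBasis]

lemma tauBasis_false_zero : tauBasis (false, 0) = (1 : k[ℕ × ℤ]) := by
  rw [tauBasis_apply]; rfl

lemma single_mul_tauBasis (ε : Bool) (j : ℤ) :
    single (0, 1) (1 : k) * tauBasis (ε, j) = tauBasis (ε, j + 1) := by
  rw [tauBasis_apply, tauBasis_apply, single_mul_single, one_mul]
  congr 1
  ext <;> simp [add_comm]

end TauBasis

lemma mk_X1_sq : Ideal.Quotient.mk relIdeal18 (X 1) ^ 2 =
    Ideal.Quotient.mk relIdeal18 (X 0) * Ideal.Quotient.mk relIdeal18 (X 2) := by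
  rw [← map_pow, ← map_mul, Ideal.Quotient.eq, CharTwo.sub_eq_add]
  exact Ideal.subset_span rfl

def uvEval : Poly18 →ₐ[ZMod 2] (ZMod 2)[ℕ × ℤ] :=
  aeval ![single (2, -1) 1, single (1, 0) 1, single (0, 1) 1]

lemma uvEval_X0 : uvEval (X 0) = single (2, -1) 1 := aeval_X _ _

lemma uvEval_X1 : uvEval (X 1) = single (1, 0) 1 := aeval_X _ _

lemma uvEval_X2 : uvEval (X 2) = single (0, 1) 1 := aeval_X _ _

lemma uvEval_mem_relIdeal18 {p : Poly18} (hp : p ∈ relIdeal18) : uvEval p = 0 := by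
  obtain ⟨q, rfl⟩ := Ideal.mem_span_singleton'.mp hp
  have hrel : uvEval (X 1 ^ 2 + X 0 * X 2) = 0 := by
    simp [uvEval_X0, uvEval_X1, uvEval_X2, single_pow, single_mul_single, ← single_add,
      CharTwo.add_self_eq_zero]
  rw [map_mul, hrel, mul_zero]

def quotEval : Ring18 →ₐ[ZMod 2] (ZMod 2)[ℕ × ℤ] :=
  Ideal.Quotient.liftₐ relIdeal18 uvEval fun _ => uvEval_mem_relIdeal18

lemma quotEval_mk (p : Poly18) : quotEval (Ideal.Quotient.mk relIdeal18 p) = uvEval p := rfl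

scoped instance algebraRing18 : Algebra Ring18 (ZMod 2)[ℕ × ℤ] := quotEval.toRingHom.toAlgebra

lemma algebraMap_mk (p : Poly18) :
    algebraMap Ring18 (ZMod 2)[ℕ × ℤ] (Ideal.Quotient.mk relIdeal18 p) = uvEval p := rfl

/-- `k[ℕ × ℤ]` stands for `k[u, v, v⁻¹]`, with `single (a, j) 1 = uᵃvʲ`; `τ` acts as `u²v⁻¹`. -/
scoped instance algebraPolynomialRing18 : Algebra (Polynomial (ZMod 2)) Ring18 :=
  structMap18.toAlgebra

scoped instance : IsScalarTower (Polynomial (ZMod 2)) Ring18 (ZMod 2)[ℕ × ℤ] :=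
  .of_algebraMap_eq' <| congrArg AlgHom.toRingHom <| Polynomial.algHom_ext
    (f := Polynomial.aeval (single (2, -1) 1))
    (g := quotEval.comp ((Ideal.Quotient.mkₐ (ZMod 2) relIdeal18).comp (Polynomial.aeval (X 0))))
    (by simp [quotEval_mk, uvEval_X0])

lemma algebraMap_mk_X2_pow (n : ℕ) :
    algebraMap Ring18 (ZMod 2)[ℕ × ℤ] (Ideal.Quotient.mk relIdeal18 (X 2) ^ n) =
      single ((0 : ℕ), (n : ℤ)) (1 : ZMod 2) := by
  simp [algebraMap_mk, uvEval_X2, single_pow]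

lemma algebraMap_mk_X2 :
    algebraMap Ring18 (ZMod 2)[ℕ × ℤ] (Ideal.Quotient.mk relIdeal18 (X 2)) = single (0, 1) 1 := by
  simpa using algebraMap_mk_X2_pow 1

lemma exists_mul_algebraMap_pow_eq (z : (ZMod 2)[ℕ × ℤ]) :
    ∃ (r : Ring18) (n : ℕ), z * algebraMap Ring18 _ (Ideal.Quotient.mk relIdeal18 (X 2) ^ n) =
      algebraMap Ring18 _ r := by
  induction z using AddMonoidAlgebra.induction_linear with
  | zero => exact ⟨0, 0, by simp⟩
  | add f g hf hg =>
    obtain ⟨r, n, hr⟩ := hf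
    obtain ⟨s, m, hs⟩ := hg
    refine ⟨r * Ideal.Quotient.mk relIdeal18 (X 2) ^ m + s * Ideal.Quotient.mk relIdeal18 (X 2) ^ n,
      n + m, ?_⟩
    simp only [map_add, map_mul, ← hr, ← hs, pow_add]
    ring
  | single y c =>
    refine ⟨Ideal.Quotient.mk relIdeal18 (C c * X 1 ^ y.1 * X 2 ^ y.2.toNat), (-y.2).toNat, ?_⟩
    have hy : y + (0, ((-y.2).toNat : ℤ)) = (y.1, (y.2.toNat : ℤ)) := by ext <;> simp; omega
    rw [algebraMap_mk_X2_pow, single_mul_single, mul_one, hy]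
    simp [algebraMap_mk, uvEval_X1, uvEval_X2, single_pow, single_mul_single]

section Lift

variable {S : Type*} [CommRing S] [Algebra Ring18 S]

def uvLift (w : Sˣ) : (ZMod 2)[ℕ × ℤ] →+* S :=
  liftNCRingHom ((algebraMap Ring18 S).comp (algebraMap (ZMod 2) Ring18))
    { toFun := fun x =>
        algebraMap Ring18 S (Ideal.Quotient.mk relIdeal18 (X 1)) ^ x.toAdd.1 * ↑(w ^ x.toAdd.2)
      map_one' := by simp
      map_mul' := fun x y => by
        simp only [toAdd_mul, Prod.fst_add, Prod.snd_add, pow_add, zpow_add, Units.val_mul]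
        ring }
    fun _ _ => .all _ _

lemma uvLift_single_one (w : Sˣ) (a : ℕ) (j : ℤ) :
    uvLift w (single (a, j) 1) =
      algebraMap Ring18 S (Ideal.Quotient.mk relIdeal18 (X 1)) ^ a * ↑(w ^ j) := by
  simp [uvLift, liftNCRingHom_single]

lemma uvLift_comp_algebraMap (w : Sˣ)
    (hw : (w : S) = algebraMap Ring18 S (Ideal.Quotient.mk relIdeal18 (X 2))) :
    (uvLift w).comp (algebraMap Ring18 (ZMod 2)[ℕ × ℤ]) = algebraMap Ring18 S := by
  refine Ideal.Quotient.ringHom_ext (MvPolynomial.ringHom_ext (fun c => ?_) fun i => ?_)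
  · rw [← ZMod.natCast_zmod_val c]
    simp only [map_natCast]
  · fin_cases i
    · simp only [Fin.zero_eta, Fin.isValue, RingHom.comp_apply, algebraMap_mk, uvEval_X0,
        uvLift_single_one]
      rw [zpow_neg_one, ← map_pow, mk_X1_sq, map_mul, ← hw, Units.mul_inv_cancel_right]
    · simp [algebraMap_mk, uvEval_X1, uvLift_single_one]
    · simpa [algebraMap_mk, uvEval_X2, uvLift_single_one] using hw

end Lift

scoped instance isLocalization_away :
    IsLocalization.Away (Ideal.Quotient.mk relIdeal18 (X 2)) (ZMod 2)[ℕ × ℤ] where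
  map_units := by
    rintro ⟨_, n, rfl⟩
    rw [algebraMap_mk_X2_pow]
    exact IsUnit.of_mul_eq_one (single (0, -n) 1) (by simp [single_mul_single]; rfl)
  surj z := by
    obtain ⟨r, n, h⟩ := exists_mul_algebraMap_pow_eq z
    exact ⟨(r, ⟨_, n, rfl⟩), h⟩
  exists_of_eq {x y} h := by
    let S := Localization.Away (Ideal.Quotient.mk relIdeal18 (X 2))
    have hv := IsLocalization.Away.algebraMap_isUnit (S := S) (Ideal.Quotient.mk relIdeal18 (X 2))
    apply IsLocalization.exists_of_eq (S := S)
    rw [← uvLift_comp_algebraMap hv.unit rfl, RingHom.comp_apply, RingHom.comp_apply, h]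

lemma tauBasis_true_zero :
    tauBasis (true, 0) = algebraMap Ring18 (ZMod 2)[ℕ × ℤ] (Ideal.Quotient.mk relIdeal18 (X 1)) := by
  simp [tauBasis_apply, algebraMap_mk, uvEval_X1]

end

end UVLaurent

open UVLaurent

/-- Let `L` be the localization of `R = F₂[τ][u, v]/(u² + τ·v)` at the multiplicative set of
powers of `v`, viewed as an `F₂[τ]`-module via `F₂[τ] → R → L`.  Then `L` is free over `F₂[τ]`
with basis `{v^j : j ∈ ℤ} ∪ {u·v^j : j ∈ ℤ}`: the basis is pinned down by `b (false, 0) = 1`,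
`b (true, 0) = u`, and multiplication by `v` carrying `b (x, j)` to `b (x, j + 1)`, so that
`b (false, j) = v^j` and `b (true, j) = u·v^j` (with `v⁻¹` the inverse of `v`). -/
theorem stmt_18 (L : Type) [CommRing L] [Algebra Ring18 L]
    [IsLocalization.Away (Ideal.Quotient.mk relIdeal18 (X 2)) L]
    [Algebra (Polynomial (ZMod 2)) L]
    (hcomp : algebraMap (Polynomial (ZMod 2)) L = (algebraMap Ring18 L).comp structMap18) :
    ∃ b : Module.Basis (Bool × ℤ) (Polynomial (ZMod 2)) L,
      b (false, 0) = 1 ∧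
      b (true, 0) = algebraMap Ring18 L (Ideal.Quotient.mk relIdeal18 (X 1)) ∧
      ∀ (x : Bool) (j : ℤ),
        algebraMap Ring18 L (Ideal.Quotient.mk relIdeal18 (X 2)) * b (x, j) = b (x, j + 1) := by
  have : IsScalarTower (Polynomial (ZMod 2)) Ring18 L := .of_algebraMap_eq' hcomp
  let e := IsLocalization.algEquiv (Submonoid.powers (Ideal.Quotient.mk relIdeal18 (X 2)))
    (ZMod 2)[ℕ × ℤ] L
  refine ⟨tauBasis.map (e.restrictScalars (Polynomial (ZMod 2))).toLinearEquiv, ?_, ?_, fun ε j => ?_⟩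
  · simp [tauBasis_false_zero]
  · simp [tauBasis_true_zero]
  · simp [← single_mul_tauBasis, ← algebraMap_mk_X2]
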